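/- arXiv:1309.4079 — 3 statements merged into one kernel-verified Lean document; each statement's English description precedes it below -/
import Mathlib

section
/- Let N^C and Ñ^C be the sequences defined by the recursion in (7.1) with N^C_1 = Ñ^C_1 = 1. Then for every d ≥ 1: N^C_d ≡ 1 (mod 4) if d is odd and N^C_d ≡ 0 (mod 4) if d is even; moreover Ñ^C_d ≡ 1 (mod 4) if d is odd or d = 2, Ñ^C_4 ≡ 2 (mod 4), and Ñ^C_d ≡ 0 (mod 4) if d is even and d ∉ {2,4}. -/
/-!
Everything is reduced modulo 4 by strong induction on `d`, the cases `d ≤ 4` being computed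
directly. A summand `(d₁, d - d₁)` of either recursion can be nonzero mod 4 only if `N_{d-d₁}` is
odd, i.e. `d - d₁` is odd, and `Ñ_{d₁} ≢ 0`, i.e. `d₁` is odd or `d₁ ∈ {2, 4}`.

For odd `d` only `d₁ = 2, 4` survive, and their coefficients are determined by the parities of
`C(4e+7, 3)`, `C(4e+7, 6)`, `C(4e+8, 3)`, `C(4e+8, 6)` (Lucas' theorem). For even `d` only odd
`d₁` survive; there the coefficient of `N` is `C(2d-3, 2d₁-2) - (d-1) C(2d-3, 2d₁-1)` mod 4, and
twice the coefficient of `Ñ` is `(d-d₁)² C(2d-2, 2d₁-1) ≡ C(2d-3, 2d₁-2) + C(2d-3, 2d₁-1)` mod 8.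
Summed over odd `d₁`, these become sums of `C(n, k)` over a residue class of `k` mod 4, and such
a sum is divisible by 8 as soon as `n ≥ 8`, by Pascal's rule starting from row 8.
-/

open Finset

def sectionChooseSum (m n : ℕ) (r : ZMod m) : ℕ :=
  ∑ k ∈ range (n + 1) with ((k : ℕ) : ZMod m) = r, n.choose k

theorem sectionChooseSum_succ (m n : ℕ) (r : ZMod m) :
    sectionChooseSum m (n + 1) r = sectionChooseSum m n r + sectionChooseSum m n (r - 1) := by
  have shift : (∑ k ∈ range (n + 1),
      if ((k + 1 : ℕ) : ZMod m) = r then n.choose (k + 1) else 0)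
        + (if ((0 : ℕ) : ZMod m) = r then 1 else 0) = sectionChooseSum m n r := by
    have h := sum_range_succ' (fun k => if ((k : ℕ) : ZMod m) = r then n.choose k else 0) (n + 1)
    rw [sum_range_succ, Nat.choose_succ_self, ite_self, add_zero] at h
    rw [sectionChooseSum, sum_filter, h, Nat.choose_zero_right]
  have pascal : ∀ k : ℕ, (if ((k + 1 : ℕ) : ZMod m) = r then (n + 1).choose (k + 1) else 0)
      = (if (k : ZMod m) = r - 1 then n.choose k else 0)
        + if ((k + 1 : ℕ) : ZMod m) = r then n.choose (k + 1) else 0 := by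
    intro k
    simp only [Nat.cast_succ, ← eq_sub_iff_add_eq, Nat.choose_succ_succ']
    split_ifs <;> simp
  rw [sectionChooseSum, sum_filter, sum_range_succ', Nat.choose_zero_right]
  simp only [pascal, sum_add_distrib]
  rw [add_assoc, shift, add_comm]
  simp only [sectionChooseSum, sum_filter]

theorem eight_dvd_sectionChooseSum_four {n : ℕ} (hn : 8 ≤ n) (r : ZMod 4) :
    8 ∣ sectionChooseSum 4 n r := by
  induction n, hn using Nat.le_induction generalizing r with
  | base => revert r; decide +kernel -- the sections of row 8 are 72, 64, 56 and 64
  | succ n _ ih => rw [sectionChooseSum_succ]; exact dvd_add (ih r) (ih (r - 1))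

theorem sum_Ioo_odd_eq_sum_range {M : Type*} [AddCommMonoid M] (d j : ℕ) (hj : j < 2)
    (f : ℕ → M) :
    ∑ d1 ∈ Ioo 0 d with Odd d1, f (2 * d1 - 2 + j)
      = ∑ k ∈ range (2 * d - 2) with ((k : ℕ) : ZMod 4) = j, f k := by
  have hmod : ∀ k : ℕ, (k : ZMod 4) = j ↔ k % 4 = j := fun k => by
    rw [ZMod.natCast_eq_natCast_iff', Nat.mod_eq_of_lt (by omega : j < 4)]
  refine sum_nbij' (fun d1 => 2 * d1 - 2 + j) (fun k => k / 2 + 1) ?_ ?_ ?_ ?_ fun _ _ => rfl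
  all_goals intro a ha; simp only [mem_filter, mem_Ioo, mem_range, hmod, Nat.odd_iff] at ha ⊢
  all_goals omega

theorem Nat.choose_four_mul_add_modEq_two {q s : ℕ} (hs : s < 4) (k : ℕ) :
    (4 * q + s).choose k ≡ s.choose (k % 4) * q.choose (k / 4) [MOD 2] := by
  have lucas (n k : ℕ) :=
    Choose.choose_modEq_choose_mod_mul_choose_div_nat (p := 2) (n := n) (k := k)
  have low := lucas (4 * q + s) k
  have high := lucas (2 * q + s / 2) (k / 2)
  have small := lucas s (k % 4)
  rw [show (4 * q + s) % 2 = s % 2 by omega, show (4 * q + s) / 2 = 2 * q + s / 2 by omega] at low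
  rw [show (2 * q + s / 2) % 2 = s / 2 by omega, show (2 * q + s / 2) / 2 = q by omega,
    show k / 2 / 2 = k / 4 by omega] at high
  rw [show k % 4 % 2 = k % 2 by omega, show k % 4 / 2 = k / 2 % 2 by omega] at small
  calc (4 * q + s).choose k
      ≡ (s % 2).choose (k % 2) * ((s / 2).choose (k / 2 % 2) * q.choose (k / 4)) [MOD 2] :=
        low.trans (high.mul_left _)
    _ = (s % 2).choose (k % 2) * (s / 2).choose (k / 2 % 2) * q.choose (k / 4) := by ring
    _ ≡ s.choose (k % 4) * q.choose (k / 4) [MOD 2] := small.symm.mul_right _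

def coeffN (d d1 : ℕ) : ℤ :=
  ((d - d1 : ℕ) : ℤ) ^ 2 * (Nat.choose (2 * d - 3) (2 * d1 - 2) : ℤ)
    - (d1 : ℤ) * ((d - d1 : ℕ) : ℤ) * (Nat.choose (2 * d - 3) (2 * d1 - 1) : ℤ)

def coeffNt (d d1 : ℕ) : ℤ :=
  (d1 : ℤ) * ((d - d1 : ℕ) : ℤ) ^ 2 * (Nat.choose (2 * d - 2) (2 * d1 - 1) : ℤ)
    - ((d - d1 : ℕ) : ℤ) ^ 3 * (Nat.choose (2 * d - 2) (2 * d1 - 2) : ℤ)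

theorem exists_natCast_eq_two_mul_add_of_modEq_two {a b : ℕ} (h : a ≡ b [MOD 2]) :
    ∃ t : ZMod 4, (a : ZMod 4) = 2 * t + b := by
  obtain ⟨z, hz⟩ := Nat.modEq_iff_dvd.mp h.symm
  refine ⟨z, ?_⟩
  have hz4 := congrArg (Int.cast : ℤ → ZMod 4) hz
  push_cast at hz4
  linear_combination hz4

theorem coeffN_two_add_two_mul_coeffN_four (e : ℕ) :
    (coeffN (2 * e + 5) 2 + 2 * coeffN (2 * e + 5) 4 : ZMod 4) = 1 := by
  have c2 : (4 * e + 7).choose 2 = (4 * e + 7) * (2 * e + 3) := by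
    rw [Nat.choose_two_right, show 4 * e + 7 - 1 = 2 * (2 * e + 3) by omega, mul_left_comm,
      Nat.mul_div_cancel_left _ two_pos]
  obtain ⟨t3, c3⟩ := exists_natCast_eq_two_mul_add_of_modEq_two
    (Nat.choose_four_mul_add_modEq_two (q := e + 1) (s := 3) (by norm_num) 3)
  obtain ⟨t6, c6⟩ := exists_natCast_eq_two_mul_add_of_modEq_two
    (Nat.choose_four_mul_add_modEq_two (q := e + 1) (s := 3) (by norm_num) 6)
  norm_num [show 4 * (e + 1) + 3 = 4 * e + 7 by ring] at c3 c6
  simp only [coeffN, show 2 * (2 * e + 5) - 3 = 4 * e + 7 by omega,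
    show 2 * e + 5 - 2 = 2 * e + 3 by omega, show 2 * e + 5 - 4 = 2 * e + 1 by omega]
  push_cast [c2, c3, c6]
  ring_nf
  reduce_mod_char

theorem natCast_add_coeffNt_two_add_two_mul_coeffNt_four (e : ℕ) :
    ((2 * e + 5 : ℕ) + coeffNt (2 * e + 5) 2 + 2 * coeffNt (2 * e + 5) 4 : ZMod 4) = 1 := by
  have c2 : (4 * e + 8).choose 2 = (2 * e + 4) * (4 * e + 7) := by
    rw [Nat.choose_two_right, show 4 * e + 8 - 1 = 4 * e + 7 by omega,
      show 4 * e + 8 = 2 * (2 * e + 4) by ring, mul_assoc, Nat.mul_div_cancel_left _ two_pos]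
  obtain ⟨t3, c3⟩ := exists_natCast_eq_two_mul_add_of_modEq_two
    (Nat.choose_four_mul_add_modEq_two (q := e + 2) (s := 0) (by norm_num) 3)
  obtain ⟨t6, c6⟩ := exists_natCast_eq_two_mul_add_of_modEq_two
    (Nat.choose_four_mul_add_modEq_two (q := e + 2) (s := 0) (by norm_num) 6)
  norm_num [show 4 * (e + 2) + 0 = 4 * e + 8 by ring] at c3 c6
  simp only [coeffNt, show 2 * (2 * e + 5) - 2 = 4 * e + 8 by omega,
    show 2 * e + 5 - 2 = 2 * e + 3 by omega, show 2 * e + 5 - 4 = 2 * e + 1 by omega]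
  push_cast [c2, c3, c6]
  ring_nf
  reduce_mod_char

theorem coeffN_eq_of_odd {d d1 : ℕ} (h1 : Odd d1) (h2 : Odd (d - d1)) (hlt : d1 < d) :
    (coeffN d d1 : ZMod 4)
      = (2 * d - 3).choose (2 * d1 - 2) - ((d : ZMod 4) - 1) * (2 * d - 3).choose (2 * d1 - 1) := by
  obtain ⟨a, rfl⟩ := h1
  obtain ⟨b, hb⟩ := h2
  have hd : (d : ZMod 4) = 2 * a + 1 + (2 * b + 1) := by
    rw [show d = 2 * a + 1 + (2 * b + 1) by omega]; push_cast; ring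
  rw [coeffN, hb, hd]
  push_cast
  ring_nf
  reduce_mod_char

theorem two_mul_coeffNt {d d1 : ℕ} (h0 : 0 < d1) (hlt : d1 < d) :
    2 * coeffNt d d1 = ((d - d1 : ℕ) : ℤ) ^ 2 * (2 * d - 2).choose (2 * d1 - 1) := by
  obtain ⟨i, rfl⟩ : ∃ i, d1 = i + 1 := ⟨d1 - 1, by omega⟩
  obtain ⟨j, rfl⟩ : ∃ j, d = i + 1 + (j + 1) := ⟨d - i - 2, by omega⟩
  have key : ((2 * i + 2 * j + 2).choose (2 * i + 1) : ℤ) * (2 * i + 1)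
      = (2 * i + 2 * j + 2).choose (2 * i) * (2 * (j + 1)) := by
    have h := Nat.choose_succ_right_eq (2 * i + 2 * j + 2) (2 * i)
    rw [show 2 * i + 2 * j + 2 - 2 * i = 2 * (j + 1) by omega] at h
    exact_mod_cast h
  simp only [coeffNt, show i + 1 + (j + 1) - (i + 1) = j + 1 by omega,
    show 2 * (i + 1 + (j + 1)) - 2 = 2 * i + 2 * j + 2 by omega,
    show 2 * (i + 1) - 1 = 2 * i + 1 by omega, show 2 * (i + 1) - 2 = 2 * i by omega]
  push_cast
  linear_combination ((j : ℤ) + 1) ^ 2 * key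

theorem eight_dvd_sum_Ioo_odd_choose {d j : ℕ} (hd : 6 ≤ d) (hj : j < 2) :
    8 ∣ ∑ d1 ∈ Ioo 0 d with Odd d1, (2 * d - 3).choose (2 * d1 - 2 + j) := by
  rw [sum_Ioo_odd_eq_sum_range d j hj, show 2 * d - 2 = 2 * d - 3 + 1 by omega]
  exact eight_dvd_sectionChooseSum_four (by omega) j

theorem sum_Ioo_odd_coeffN_eq_zero {m : ℕ} (hm : 3 ≤ m) :
    ∑ d1 ∈ Ioo 0 (2 * m) with Odd d1, (coeffN (2 * m) d1 : ZMod 4) = 0 := by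
  have vanish (j : ℕ) (hj : j < 2) :
      ∑ d1 ∈ Ioo 0 (2 * m) with Odd d1,
        ((2 * (2 * m) - 3).choose (2 * d1 - 2 + j) : ZMod 4) = 0 := by
    rw [← Nat.cast_sum, ZMod.natCast_eq_zero_iff]
    exact dvd_trans (by norm_num) (eight_dvd_sum_Ioo_odd_choose (by omega) hj)
  calc ∑ d1 ∈ Ioo 0 (2 * m) with Odd d1, (coeffN (2 * m) d1 : ZMod 4)
      = ∑ d1 ∈ Ioo 0 (2 * m) with Odd d1, (((2 * (2 * m) - 3).choose (2 * d1 - 2 + 0) : ZMod 4)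
          - ((2 * m : ℕ) - 1 : ZMod 4) * (2 * (2 * m) - 3).choose (2 * d1 - 2 + 1)) := by
        refine sum_congr rfl fun d1 hd1 => ?_
        simp only [mem_filter, mem_Ioo] at hd1
        rw [coeffN_eq_of_odd hd1.2 ?_ hd1.1.2, add_zero, show 2 * d1 - 2 + 1 = 2 * d1 - 1 by omega]
        rw [Nat.odd_iff] at hd1 ⊢
        omega
    _ = 0 := by
      rw [sum_sub_distrib, ← mul_sum, vanish 0 (by norm_num), vanish 1 (by norm_num)]
      ring

theorem zmod_eight_natCast_sq_eq_one_of_odd {x : ℕ} (hx : Odd x) : (x : ZMod 8) ^ 2 = 1 := by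
  have h := (ZMod.intCast_zmod_eq_zero_iff_dvd _ 8).mpr
    (Int.eight_dvd_sq_sub_one_of_odd (by exact_mod_cast hx : Odd (x : ℤ)))
  push_cast at h
  exact sub_eq_zero.mp h

theorem sum_Ioo_odd_coeffNt_eq_zero {m : ℕ} (hm : 3 ≤ m) :
    ∑ d1 ∈ Ioo 0 (2 * m) with Odd d1, (coeffNt (2 * m) d1 : ZMod 4) = 0 := by
  have doubled : ((2 * ∑ d1 ∈ Ioo 0 (2 * m) with Odd d1, coeffNt (2 * m) d1 : ℤ) : ZMod 8) = 0 := by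
    have vanish (j : ℕ) (hj : j < 2) :
        ∑ d1 ∈ Ioo 0 (2 * m) with Odd d1,
          ((2 * (2 * m) - 3).choose (2 * d1 - 2 + j) : ZMod 8) = 0 := by
      rw [← Nat.cast_sum, ZMod.natCast_eq_zero_iff]
      exact eight_dvd_sum_Ioo_odd_choose (by omega) hj
    calc ((2 * ∑ d1 ∈ Ioo 0 (2 * m) with Odd d1, coeffNt (2 * m) d1 : ℤ) : ZMod 8)
        = ∑ d1 ∈ Ioo 0 (2 * m) with Odd d1, (((2 * (2 * m) - 3).choose (2 * d1 - 2 + 0) : ZMod 8)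
            + (2 * (2 * m) - 3).choose (2 * d1 - 2 + 1)) := by
          rw [mul_sum, Int.cast_sum]
          refine sum_congr rfl fun d1 hd1 => ?_
          simp only [mem_filter, mem_Ioo] at hd1
          have hodd : Odd (2 * m - d1) := by rw [Nat.odd_iff] at hd1 ⊢; omega
          rw [two_mul_coeffNt hd1.1.1 hd1.1.2, show 2 * (2 * m) - 2 = 2 * (2 * m) - 3 + 1 by omega,
            show 2 * d1 - 1 = 2 * d1 - 2 + 0 + 1 by omega, Nat.choose_succ_succ']
          push_cast
          rw [zmod_eight_natCast_sq_eq_one_of_odd hodd, one_mul, add_zero]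
      _ = 0 := by rw [sum_add_distrib, vanish 0 (by norm_num), vanish 1 (by norm_num), add_zero]
  have h4 : (4 : ℤ) ∣ ∑ d1 ∈ Ioo 0 (2 * m) with Odd d1, coeffNt (2 * m) d1 := by
    have := (ZMod.intCast_zmod_eq_zero_iff_dvd _ 8).mp doubled
    omega
  rw [← Int.cast_sum]
  exact (ZMod.intCast_zmod_eq_zero_iff_dvd _ 4).mpr h4

def residueN (d : ℕ) : ZMod 4 := if Odd d then 1 else 0

def residueNt (d : ℕ) : ZMod 4 := if Odd d then 1 else if d = 2 then 1 else if d = 4 then 2 else 0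

def HasResidues (N Nt : ℕ → ℤ) (d : ℕ) : Prop :=
  (N d : ZMod 4) = residueN d ∧ (Nt d : ZMod 4) = residueNt d

theorem sum_mul_residue_of_odd (c : ℕ → ZMod 4) {d : ℕ} (hd : Odd d) (h5 : 5 ≤ d) :
    ∑ d1 ∈ Ioo 0 d, c d1 * residueNt d1 * residueN (d - d1) = c 2 + 2 * c 4 := by
  rw [Nat.odd_iff] at hd
  rw [sum_eq_add_of_mem 2 4 (by simp; omega) (by simp; omega) (by decide)]
  · simp [residueN, residueNt, Nat.odd_iff, show (d - 2) % 2 = 1 by omega,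
      show (d - 4) % 2 = 1 by omega, mul_comm]
  · intro x _ hx
    simp only [residueN, residueNt, Nat.odd_iff]
    split_ifs <;> first | omega | simp

theorem sum_mul_residue_of_even (c : ℕ → ZMod 4) {d : ℕ} (hd : Even d) :
    ∑ d1 ∈ Ioo 0 d, c d1 * residueNt d1 * residueN (d - d1)
      = ∑ d1 ∈ Ioo 0 d with Odd d1, c d1 := by
  rw [sum_filter]
  refine sum_congr rfl fun x hx => ?_
  rw [mem_Ioo] at hx
  rw [Nat.even_iff] at hd
  simp only [residueN, residueNt, Nat.odd_iff]
  split_ifs <;> first | omega | simp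

section Recursion

variable {N Nt : ℕ → ℤ}

theorem cast_sum_eq_sum_mul_residue (c : ℕ → ℤ) {d : ℕ}
    (ih : ∀ m, 0 < m → m < d → HasResidues N Nt m) :
    ((∑ d1 ∈ Ioo 0 d, c d1 * Nt d1 * N (d - d1) : ℤ) : ZMod 4)
      = ∑ d1 ∈ Ioo 0 d, (c d1 : ZMod 4) * residueNt d1 * residueN (d - d1) := by
  push_cast
  refine sum_congr rfl fun d1 hd1 => ?_
  rw [mem_Ioo] at hd1
  rw [(ih d1 hd1.1 hd1.2).2, (ih (d - d1) (by omega) (by omega)).1]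

theorem hasResidues_of_forall_lt
    (hN : ∀ d, 2 ≤ d → N d = ∑ d1 ∈ Ioo 0 d, coeffN d d1 * Nt d1 * N (d - d1))
    (hNt : ∀ d, 2 ≤ d → Nt d = d * N d + ∑ d1 ∈ Ioo 0 d, coeffNt d d1 * Nt d1 * N (d - d1))
    {d : ℕ} (h5 : 5 ≤ d)
    (ih : ∀ m, 0 < m → m < d → HasResidues N Nt m) : HasResidues N Nt d := by
  have hNd : (N d : ZMod 4)
      = ∑ d1 ∈ Ioo 0 d, (coeffN d d1 : ZMod 4) * residueNt d1 * residueN (d - d1) := by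
    rw [hN d (by omega), cast_sum_eq_sum_mul_residue _ ih]
  have hNtd : (Nt d : ZMod 4) = d * N d
      + ∑ d1 ∈ Ioo 0 d, (coeffNt d d1 : ZMod 4) * residueNt d1 * residueN (d - d1) := by
    rw [hNt d (by omega), Int.cast_add, Int.cast_mul, Int.cast_natCast,
      cast_sum_eq_sum_mul_residue _ ih]
  rcases Nat.even_or_odd d with hd | hd
  · obtain ⟨m, rfl⟩ : ∃ m, d = 2 * m := ⟨d / 2, by rw [Nat.even_iff] at hd; omega⟩
    rw [sum_mul_residue_of_even _ hd, sum_Ioo_odd_coeffN_eq_zero (by omega)] at hNd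
    rw [sum_mul_residue_of_even _ hd, sum_Ioo_odd_coeffNt_eq_zero (by omega), hNd] at hNtd
    have hd' : ¬Odd (2 * m) := Nat.not_odd_iff_even.mpr hd
    refine ⟨by simp [hNd, residueN, hd'], ?_⟩
    simp [hNtd, residueNt, hd', show 2 * m ≠ 2 by omega, show 2 * m ≠ 4 by omega]
  · obtain ⟨e, rfl⟩ : ∃ e, d = 2 * e + 5 := ⟨(d - 5) / 2, by rw [Nat.odd_iff] at hd; omega⟩
    rw [sum_mul_residue_of_odd _ hd h5, coeffN_two_add_two_mul_coeffN_four] at hNd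
    rw [sum_mul_residue_of_odd _ hd h5, hNd, mul_one, ← add_assoc,
      natCast_add_coeffNt_two_add_two_mul_coeffNt_four] at hNtd
    exact ⟨by simp [hNd, residueN, hd], by simp [hNtd, residueNt, hd]⟩

theorem initial_values (hN1 : N 1 = 1) (hNt1 : Nt 1 = 1)
    (hN : ∀ d, 2 ≤ d → N d = ∑ d1 ∈ Ioo 0 d, coeffN d d1 * Nt d1 * N (d - d1))
    (hNt : ∀ d, 2 ≤ d → Nt d = d * N d + ∑ d1 ∈ Ioo 0 d, coeffNt d d1 * Nt d1 * N (d - d1)) :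
    N 2 = 0 ∧ Nt 2 = 1 ∧ N 3 = 1 ∧ Nt 3 = 5 ∧ N 4 = 4 ∧ Nt 4 = 58 := by
  have h2 : N 2 = 0 := by
    rw [hN 2 le_rfl, show Ioo 0 2 = {1} from rfl]; simp [coeffN, hN1, hNt1]
  have h2t : Nt 2 = 1 := by
    rw [hNt 2 le_rfl, show Ioo 0 2 = {1} from rfl]; simp [coeffNt, hN1, hNt1, h2]
  have h3 : N 3 = 1 := by
    rw [hN 3 (by norm_num), show Ioo 0 3 = {1, 2} from rfl]; simp [coeffN, hN1, hNt1, h2, h2t]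
  have h3t : Nt 3 = 5 := by
    rw [hNt 3 (by norm_num), show Ioo 0 3 = {1, 2} from rfl]
    simp [coeffNt, hN1, hNt1, h2, h2t, h3, Nat.choose]
  have h4 : N 4 = 4 := by
    rw [hN 4 (by norm_num), show Ioo 0 4 = {1, 2, 3} from rfl]
    simp [coeffN, hN1, hNt1, h2, h2t, h3, h3t]
  have h4t : Nt 4 = 58 := by
    rw [hNt 4 (by norm_num), show Ioo 0 4 = {1, 2, 3} from rfl]
    simp [coeffNt, hN1, hNt1, h2, h2t, h3, h3t, h4, Nat.choose]
  exact ⟨h2, h2t, h3, h3t, h4, h4t⟩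

theorem hasResidues (hN1 : N 1 = 1) (hNt1 : Nt 1 = 1)
    (hN : ∀ d, 2 ≤ d → N d = ∑ d1 ∈ Ioo 0 d, coeffN d d1 * Nt d1 * N (d - d1))
    (hNt : ∀ d, 2 ≤ d → Nt d = d * N d + ∑ d1 ∈ Ioo 0 d, coeffNt d d1 * Nt d1 * N (d - d1))
    {d : ℕ} (hd : 0 < d) : HasResidues N Nt d := by
  obtain ⟨h2, h2t, h3, h3t, h4, h4t⟩ := initial_values hN1 hNt1 hN hNt
  induction d using Nat.strong_induction_on with
  | _ d ih =>
    rcases lt_or_ge d 5 with h5 | h5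
    · interval_cases d <;>
        simp [HasResidues, residueN, residueNt, Nat.odd_iff, hN1, hNt1, h2, h2t, h3, h3t, h4, h4t] <;>
        decide
    · exact hasResidues_of_forall_lt hN hNt h5 fun m hm hmd => ih m hmd hm

end Recursion

theorem Int.emod_eq_of_intCast_zmod_eq {a : ℤ} {n r : ℕ} (hr : r < n) (h : (a : ZMod n) = r) :
    a % n = r := by
  rw [(ZMod.intCast_eq_intCast_iff' a r n).mp (by simpa using h)]
  exact Int.emod_eq_of_lt (by positivity) (by omega)

/-- Mod-4 behaviour of the complex genus-0 GW-invariants of `P³` defined by the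
Ruan–Tian recursions (7.1) with `N_1 = Nt_1 = 1`: for every `d ≥ 1`,
`N_d ≡ 1 (mod 4)` if `d` is odd and `N_d ≡ 0 (mod 4)` if `d` is even; moreover
`Nt_d ≡ 1 (mod 4)` if `d` is odd or `d = 2`, `Nt_4 ≡ 2 (mod 4)`, and
`Nt_d ≡ 0 (mod 4)` for even `d ∉ {2, 4}`. -/
theorem stmt_5 (N Nt : ℕ → ℤ)
    (hN1 : N 1 = 1) (hNt1 : Nt 1 = 1)
    (hN : ∀ d, 2 ≤ d →
      N d = ∑ d1 ∈ Finset.Ioo 0 d,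
        (((d - d1 : ℕ) : ℤ) ^ 2 * (Nat.choose (2 * d - 3) (2 * d1 - 2) : ℤ)
            - (d1 : ℤ) * ((d - d1 : ℕ) : ℤ) * (Nat.choose (2 * d - 3) (2 * d1 - 1) : ℤ))
          * Nt d1 * N (d - d1))
    (hNt : ∀ d, 2 ≤ d →
      Nt d = (d : ℤ) * N d + ∑ d1 ∈ Finset.Ioo 0 d,
        ((d1 : ℤ) * ((d - d1 : ℕ) : ℤ) ^ 2 * (Nat.choose (2 * d - 2) (2 * d1 - 1) : ℤ)
            - ((d - d1 : ℕ) : ℤ) ^ 3 * (Nat.choose (2 * d - 2) (2 * d1 - 2) : ℤ))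
          * Nt d1 * N (d - d1)) :
    ∀ d, 1 ≤ d →
      (Odd d → N d % 4 = 1) ∧
      (Even d → N d % 4 = 0) ∧
      ((Odd d ∨ d = 2) → Nt d % 4 = 1) ∧
      (d = 4 → Nt d % 4 = 2) ∧
      ((Even d ∧ d ≠ 2 ∧ d ≠ 4) → Nt d % 4 = 0) := by
  intro d hd
  obtain ⟨hNd, hNtd⟩ := hasResidues hN1 hNt1 hN hNt hd
  have emod {a : ℤ} {r : ℕ} (hr : r < 4) (h : (a : ZMod 4) = r) : a % 4 = r :=
    Int.emod_eq_of_intCast_zmod_eq hr h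
  refine ⟨fun h => emod (r := 1) (by norm_num) ?_, fun h => emod (r := 0) (by norm_num) ?_,
    fun h => emod (r := 1) (by norm_num) ?_, fun h => emod (r := 2) (by norm_num) ?_,
    fun h => emod (r := 0) (by norm_num) ?_⟩
  · simp [hNd, residueN, h]
  · simp [hNd, residueN, Nat.not_odd_iff_even.mpr h]
  · rcases h with h | rfl
    · simp [hNtd, residueNt, h]
    · simp [hNtd, residueNt, Nat.odd_iff]
  · subst h; simp [hNtd, residueNt, Nat.odd_iff]
  · obtain ⟨he, h2, h4⟩ := h
    simp [hNtd, residueNt, Nat.not_odd_iff_even.mpr he, h2, h4]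
end

section
/- Under the mod-2 reduction of the recursion of Corollary 1.3, assuming the complex invariants satisfy the dimension-forced vanishing ⟨c1−1,c2,2i⟩^C_{d1} = 0 for d1 ≥ 2 and ⟨c1−1,2i⟩^C_{d1} = 0 for d1 ≥ 1, the real invariants satisfy ⟨c1,c2,c3,...,ck⟩_d ≡ ⟨c1+c2−1,c3,...,ck⟩_d + ∑_{2i+j=2n−1, i,j≥1} ⟨c1−1,c2,2i⟩^C_1·⟨c3,...,ck,j⟩_{d−2} (mod 2). -/
/-!
Reduce the recursion modulo 2. Every summand indexed by a nonempty submultiset `t` carries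
the factor `2 ^ |t|` and disappears, and the `d1`-th remaining summand involves
`⟨c1-1, 2i⟩^C_{d1}`, which vanishes for `d1 ≥ 1`, and `⟨c1-1, c2, 2i⟩^C_{d1}`, which vanishes
for `d1 ≥ 2`. Only `d1 = 1` survives, with the odd coefficient `d - 2`, and the leading
coefficient `d` is odd as well.
-/

open Multiset

theorem Multiset.sum_map_powerset_eq_apply_zero {α M : Type*} [AddCommMonoid M]
    (f : Multiset α → M) (s : Multiset α) (hf : ∀ t, t ≠ 0 → f t = 0) :
    (s.powerset.map f).sum = f 0 := by
  induction s using Multiset.induction with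
  | empty => simp
  | cons a s ih =>
    have hcons : ((s.powerset.map (a ::ₘ ·)).map f).sum = 0 :=
      Multiset.sum_eq_zero fun x hx => by
        obtain ⟨t, -, rfl⟩ := Multiset.mem_map.mp (Multiset.map_map f _ _ ▸ hx)
        exact hf _ Multiset.cons_ne_zero
    rw [Multiset.powerset_cons, Multiset.map_add, Multiset.sum_add, ih, hcons, add_zero]

theorem Multiset.intCast_sum_map_powerset_two_pow_mul {α ι : Type*} (s : Multiset α)
    (I : Finset ι) (g : Multiset α → ι → ℤ) :
    (((s.powerset.map fun t => ∑ i ∈ I, 2 ^ card t * g t i).sum : ℤ) : ZMod 2) =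
      ∑ i ∈ I, (g 0 i : ZMod 2) := by
  rw [Int.cast_multiset_sum, Multiset.map_map]
  refine (Multiset.sum_map_powerset_eq_apply_zero _ s fun t ht => ?_).trans ?_
  · have h2 : (2 : ZMod 2) = 0 := rfl
    simp [h2, zero_pow (Multiset.card_pos.mpr ht).ne']
  · simp

/-- The `d1`-th summand of the recursion of Corollary 1.3 for `⟨c1, c2, s⟩_d`. -/
def recursionSummand (n : ℕ) (R C : Multiset ℕ → ℕ → ℤ) (c1 c2 : ℕ) (s : Multiset ℕ)
    (d d1 : ℕ) : ℤ :=
  if 2 * d1 < d then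
    (Multiset.map (fun t : Multiset ℕ =>
      ∑ i ∈ Finset.Ico 1 n,
        (2 : ℤ) ^ Multiset.card t *
          (((d - 2 * d1 : ℕ) : ℤ) *
              C ((c1 - 1) ::ₘ c2 ::ₘ (2 * i) ::ₘ t) d1 *
              R ((2 * n - 1 - 2 * i) ::ₘ (s - t)) (d - 2 * d1) -
            (d1 : ℤ) *
              C ((c1 - 1) ::ₘ (2 * i) ::ₘ t) d1 *
              R (c2 ::ₘ (2 * n - 1 - 2 * i) ::ₘ (s - t)) (d - 2 * d1)))
      s.powerset).sum
  else 0

theorem intCast_recursionSummand_zmod_two (n : ℕ) (R C : Multiset ℕ → ℕ → ℤ)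
    (hvan1 : ∀ (a b i d1 : ℕ), 2 ≤ d1 → C (a ::ₘ b ::ₘ (2 * i) ::ₘ 0) d1 = 0)
    (hvan2 : ∀ (a i d1 : ℕ), 1 ≤ d1 → C (a ::ₘ (2 * i) ::ₘ 0) d1 = 0)
    (c1 c2 : ℕ) (s : Multiset ℕ) {d d1 : ℕ} (hd : Odd d) (hd1 : d1 ∈ Finset.Ioo 0 d) :
    (recursionSummand n R C c1 c2 s d d1 : ZMod 2) =
      if d1 = 1 then
        ∑ i ∈ Finset.Ico 1 n,
          (C ((c1 - 1) ::ₘ c2 ::ₘ (2 * i) ::ₘ 0) 1 : ZMod 2) *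
            (R ((2 * n - 1 - 2 * i) ::ₘ s) (d - 2) : ZMod 2)
      else 0 := by
  obtain ⟨hd1_pos, hd1_lt⟩ := Finset.mem_Ioo.mp hd1
  unfold recursionSummand
  split_ifs with hlt hone
  · subst hone
    have hodd : Odd (d - 2) := by obtain ⟨k, rfl⟩ := hd; exact ⟨k - 1, by omega⟩
    rw [Multiset.intCast_sum_map_powerset_two_pow_mul]
    refine Finset.sum_congr rfl fun i _ => ?_
    simp only [Multiset.sub_zero, mul_one, hvan2 _ i 1 le_rfl]
    push_cast
    rw [hodd.natCast_zmod_two]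
    ring
  · rw [Multiset.intCast_sum_map_powerset_two_pow_mul]
    refine Finset.sum_eq_zero fun i _ => ?_
    simp only [Multiset.sub_zero, hvan1 _ _ i d1 (by omega), hvan2 _ i d1 hd1_pos]
    simp
  · obtain ⟨k, rfl⟩ := hd
    omega
  · exact Int.cast_zero

open Multiset in
theorem stmt_9_general (n : ℕ) (R C : Multiset ℕ → ℕ → ℤ)
    (hrec : ∀ (c1 c2 : ℕ) (s : Multiset ℕ) (d : ℕ), 0 < d →
      R (c1 ::ₘ c2 ::ₘ s) d =
        (d : ℤ) * R ((c1 + c2 - 1) ::ₘ s) d +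
          ∑ d1 ∈ Finset.Ioo 0 d,
            if 2 * d1 < d then
              (Multiset.map (fun t : Multiset ℕ =>
                ∑ i ∈ Finset.Ico 1 n,
                  (2 : ℤ) ^ Multiset.card t *
                    (((d - 2 * d1 : ℕ) : ℤ) *
                        C ((c1 - 1) ::ₘ c2 ::ₘ (2 * i) ::ₘ t) d1 *
                        R ((2 * n - 1 - 2 * i) ::ₘ (s - t)) (d - 2 * d1) -
                      (d1 : ℤ) *
                        C ((c1 - 1) ::ₘ (2 * i) ::ₘ t) d1 *
                        R (c2 ::ₘ (2 * n - 1 - 2 * i) ::ₘ (s - t)) (d - 2 * d1)))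
                s.powerset).sum
            else 0)
    (hvan1 : ∀ (a b i d1 : ℕ), 2 ≤ d1 → C (a ::ₘ b ::ₘ (2 * i) ::ₘ 0) d1 = 0)
    (hvan2 : ∀ (a i d1 : ℕ), 1 ≤ d1 → C (a ::ₘ (2 * i) ::ₘ 0) d1 = 0) :
    ∀ (c1 c2 : ℕ) (s : Multiset ℕ) (d : ℕ), Odd d → 3 ≤ d →
      R (c1 ::ₘ c2 ::ₘ s) d % 2 =
        (R ((c1 + c2 - 1) ::ₘ s) d +
          ∑ i ∈ Finset.Ico 1 n,
            C ((c1 - 1) ::ₘ c2 ::ₘ (2 * i) ::ₘ 0) 1 *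
              R ((2 * n - 1 - 2 * i) ::ₘ s) (d - 2)) % 2 := by
  intro c1 c2 s d hd hd3
  have hrec' : R (c1 ::ₘ c2 ::ₘ s) d = (d : ℤ) * R ((c1 + c2 - 1) ::ₘ s) d +
      ∑ d1 ∈ Finset.Ioo 0 d, recursionSummand n R C c1 c2 s d d1 :=
    hrec c1 c2 s d (by omega)
  rw [hrec']
  refine (ZMod.intCast_eq_intCast_iff' _ _ 2).mp ?_
  push_cast
  rw [Finset.sum_congr rfl fun d1 hd1 =>
      intCast_recursionSummand_zmod_two n R C hvan1 hvan2 c1 c2 s hd hd1,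
    Finset.sum_ite_eq', if_pos (Finset.mem_Ioo.mpr ⟨one_pos, by omega⟩),
    hd.natCast_zmod_two, one_mul]

open Multiset in
/-- Mod-2 reduction of the recursion of Corollary 1.3 for the real genus-0 GW-invariants
`R` of `P^{2n-1}` (insertions recorded as a multiset of codimensions), in terms of the
complex invariants `C`.  Assuming the recursion together with the dimension-forced
vanishing `⟨c1-1, c2, 2i⟩^C_{d1} = 0` for `d1 ≥ 2` and `⟨c1-1, 2i⟩^C_{d1} = 0` for
`d1 ≥ 1`, for odd `d ≥ 3` one has
`⟨c1,c2,c_s⟩_d ≡ ⟨c1+c2-1,c_s⟩_d + ∑_{2i+j=2n-1, i,j≥1} ⟨c1-1,c2,2i⟩^C_1 ⟨c_s,j⟩_{d-2}`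
modulo 2. -/
theorem stmt_9 (n : ℕ) (hn : 1 ≤ n) (R C : Multiset ℕ → ℕ → ℤ)
    (hrec : ∀ (c1 c2 : ℕ) (s : Multiset ℕ) (d : ℕ), 0 < d →
      R (c1 ::ₘ c2 ::ₘ s) d =
        (d : ℤ) * R ((c1 + c2 - 1) ::ₘ s) d +
          ∑ d1 ∈ Finset.Ioo 0 d,
            if 2 * d1 < d then
              (Multiset.map (fun t : Multiset ℕ =>
                ∑ i ∈ Finset.Ico 1 n,
                  (2 : ℤ) ^ Multiset.card t *
                    (((d - 2 * d1 : ℕ) : ℤ) *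
                        C ((c1 - 1) ::ₘ c2 ::ₘ (2 * i) ::ₘ t) d1 *
                        R ((2 * n - 1 - 2 * i) ::ₘ (s - t)) (d - 2 * d1) -
                      (d1 : ℤ) *
                        C ((c1 - 1) ::ₘ (2 * i) ::ₘ t) d1 *
                        R (c2 ::ₘ (2 * n - 1 - 2 * i) ::ₘ (s - t)) (d - 2 * d1)))
                s.powerset).sum
            else 0)
    (hvan1 : ∀ (a b i d1 : ℕ), 2 ≤ d1 → C (a ::ₘ b ::ₘ (2 * i) ::ₘ 0) d1 = 0)
    (hvan2 : ∀ (a i d1 : ℕ), 1 ≤ d1 → C (a ::ₘ (2 * i) ::ₘ 0) d1 = 0) :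
    ∀ (c1 c2 : ℕ) (s : Multiset ℕ) (d : ℕ), Odd d → 3 ≤ d →
      R (c1 ::ₘ c2 ::ₘ s) d % 2 =
        (R ((c1 + c2 - 1) ::ₘ s) d +
          ∑ i ∈ Finset.Ico 1 n,
            C ((c1 - 1) ::ₘ c2 ::ₘ (2 * i) ::ₘ 0) 1 *
              R ((2 * n - 1 - 2 * i) ::ₘ s) (d - 2)) % 2 :=
  stmt_9_general n R C hrec hvan1 hvan2
end

section
/- The cross-ratio map M̄₀,₂^c → [0,∞] sending [(z0+,z0−),(z1+,z1−)] to (−1)^c · ((z1+−z0+)/(z1−−z0+)) : ((z1+−z0−)/(z1−−z0−)) is well-defined on equivalence classes: it is invariant under the action of the subgroup of Möbius transformations commuting with the involution c, where c = τ is z ↦ 1/z̄ (or z ↦ z̄ on the real structure with fixed points) and c = η is the antipodal map z ↦ −1/z̄. -/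
/-!
A Möbius map `h` scales differences by `h z - h w = det h · (z - w) / (D z · D w)`, and the
factors `D` cancel in the cross-ratio. For conjugate pairs the cross-ratio has the form
`A · conj A / (B · conj B)`: under `τ` with `A = z1 - z0`, `B = conj z1 - z0`, and under `η`,
after clearing the denominators `conj z0 · conj z1`, with `B = 1 + z0 · conj z1` and an extra
sign `-1`, which `(-1)^η` removes.
-/

open ComplexConjugate

/-- The cross-ratio of (3.1). -/
noncomputable def crossRatio (z0p z0m z1p z1m : ℂ) : ℂ :=
  ((z1p - z0p) / (z1m - z0p)) / ((z1p - z0m) / (z1m - z0m))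

theorem crossRatio_eq (z0p z0m z1p z1m : ℂ) :
    crossRatio z0p z0m z1p z1m =
      (z1p - z0p) * (z1m - z0m) / ((z1m - z0p) * (z1p - z0m)) :=
  div_div_div_eq _ _ _ _

theorem mobius_sub_mobius {K : Type*} [Field K] (a b c d x y : K)
    (hx : c * x + d ≠ 0) (hy : c * y + d ≠ 0) :
    (a * x + b) / (c * x + d) - (a * y + b) / (c * y + d)
      = (a * d - b * c) * (x - y) / ((c * x + d) * (c * y + d)) := by
  rw [div_sub_div _ _ hx hy]
  ring

theorem crossRatio_mobius (a b c d : ℂ) (hdet : a * d - b * c ≠ 0) (z0p z0m z1p z1m : ℂ)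
    (h0p : c * z0p + d ≠ 0) (h0m : c * z0m + d ≠ 0)
    (h1p : c * z1p + d ≠ 0) (h1m : c * z1m + d ≠ 0) :
    crossRatio ((a * z0p + b) / (c * z0p + d)) ((a * z0m + b) / (c * z0m + d))
        ((a * z1p + b) / (c * z1p + d)) ((a * z1m + b) / (c * z1m + d)) =
      crossRatio z0p z0m z1p z1m := by
  set Q := (c * z1p + d) * (c * z0p + d) * ((c * z1m + d) * (c * z0m + d))
  have hQ : Q ≠ 0 := by positivity
  have hdet2 : (a * d - b * c) ^ 2 ≠ 0 := pow_ne_zero 2 hdet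
  rw [crossRatio_eq, crossRatio_eq, mobius_sub_mobius _ _ _ _ _ _ h1p h0p,
    mobius_sub_mobius _ _ _ _ _ _ h1m h0m, mobius_sub_mobius _ _ _ _ _ _ h1m h0p,
    mobius_sub_mobius _ _ _ _ _ _ h1p h0m]
  calc _ = (a * d - b * c) ^ 2 * ((z1p - z0p) * (z1m - z0m)) / Q /
        ((a * d - b * c) ^ 2 * ((z1m - z0p) * (z1p - z0m)) / Q) := by
          rw [div_mul_div_comm, div_mul_div_comm]
          congr 2 <;> ring
    _ = _ := by rw [div_div_div_cancel_right₀ hQ, mul_div_mul_left _ _ hdet2]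

theorem crossRatio_conj (z0 z1 : ℂ) :
    crossRatio z0 (conj z0) z1 (conj z1) =
      ((Complex.normSq (z1 - z0) / Complex.normSq (conj z1 - z0) : ℝ) : ℂ) := by
  have hA : (z1 - z0) * (conj z1 - conj z0) = Complex.normSq (z1 - z0) := by
    rw [← Complex.mul_conj, map_sub]
  have hB : (conj z1 - z0) * (z1 - conj z0) = Complex.normSq (conj z1 - z0) := by
    rw [← Complex.mul_conj, map_sub, Complex.conj_conj]
  rw [crossRatio_eq, hA, hB, Complex.ofReal_div]

theorem neg_crossRatio_antipodal {z0 z1 : ℂ} (hz0 : z0 ≠ 0) (hz1 : z1 ≠ 0) :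
    -crossRatio z0 (-1 / conj z0) z1 (-1 / conj z1) =
      ((Complex.normSq (z1 - z0) / Complex.normSq (1 + z0 * conj z1) : ℝ) : ℂ) := by
  have hc0 : conj z0 ≠ 0 := (map_ne_zero _).mpr hz0
  have hc1 : conj z1 ≠ 0 := (map_ne_zero _).mpr hz1
  have hP : conj z0 * conj z1 ≠ 0 := mul_ne_zero hc0 hc1
  have hA : (z1 - z0) * (-1 / conj z1 - -1 / conj z0) =
      Complex.normSq (z1 - z0) / (conj z0 * conj z1) := by
    rw [← Complex.mul_conj, map_sub]
    field_simp
    ring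
  have hB : (-1 / conj z1 - z0) * (z1 - -1 / conj z0) =
      -Complex.normSq (1 + z0 * conj z1) / (conj z0 * conj z1) := by
    rw [← Complex.mul_conj, map_add, map_mul, map_one, Complex.conj_conj]
    field_simp
    ring
  rw [crossRatio_eq, hA, hB, div_div_div_cancel_right₀ hP, div_neg, neg_neg,
    Complex.ofReal_div]

/-- Well-definedness of the map (3.1): the cross-ratio is invariant under Möbius
transformations (in particular under those commuting with the involution `c`), and for
marked points in conjugate pairs under `c` the value `(-1)^c ·` cross-ratio is a
nonnegative real number: for `c = τ` (`z ↦ conj z`, `(-1)^τ = 1`) and for `c = η`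
(`z ↦ -1/conj z`, `(-1)^η = -1`). -/
theorem stmt_11 :
    (∀ a b c d : ℂ, a * d - b * c ≠ 0 →
      ∀ z0p z0m z1p z1m : ℂ,
        z0p ≠ z0m → z0p ≠ z1p → z0p ≠ z1m → z0m ≠ z1p → z0m ≠ z1m → z1p ≠ z1m →
        c * z0p + d ≠ 0 → c * z0m + d ≠ 0 → c * z1p + d ≠ 0 → c * z1m + d ≠ 0 →
        crossRatio ((a * z0p + b) / (c * z0p + d)) ((a * z0m + b) / (c * z0m + d))
            ((a * z1p + b) / (c * z1p + d)) ((a * z1m + b) / (c * z1m + d)) =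
          crossRatio z0p z0m z1p z1m)
    ∧ (∀ z0 z1 : ℂ, z1 ≠ z0 → conj z1 ≠ z0 → z1 ≠ conj z0 →
        ∃ r : ℝ, 0 ≤ r ∧ crossRatio z0 (conj z0) z1 (conj z1) = (r : ℂ))
    ∧ (∀ z0 z1 : ℂ, z0 ≠ 0 → z1 ≠ 0 → z1 ≠ z0 →
        (-1 / conj z1) ≠ z0 → z1 ≠ -1 / conj z0 →
        ∃ r : ℝ, 0 ≤ r ∧
          -crossRatio z0 (-1 / conj z0) z1 (-1 / conj z1) = (r : ℂ)) := by
  refine ⟨?_, ?_, ?_⟩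
  · exact fun a b c d hdet z0p z0m z1p z1m _ _ _ _ _ _ =>
      crossRatio_mobius a b c d hdet z0p z0m z1p z1m
  · intro z0 z1 _ _ _
    exact ⟨_, div_nonneg (Complex.normSq_nonneg _) (Complex.normSq_nonneg _), crossRatio_conj z0 z1⟩
  · intro z0 z1 hz0 hz1 _ _ _
    exact ⟨_, div_nonneg (Complex.normSq_nonneg _) (Complex.normSq_nonneg _),
      neg_crossRatio_antipodal hz0 hz1⟩
end
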